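/- arXiv:2410.19928 — 6 statements merged into one kernel-verified Lean document; each statement's English description precedes it below -/
import Mathlib

section
/- For all vectors a, b in R^n and every p ≥ 2, it holds that ⟨‖a‖^{p-2}a − ‖b‖^{p-2}b, a − b⟩ ≥ (1/2)^{p-2}‖a−b‖^p. -/
open Real

/-- Convexity: `(A+B)^(q+1) ≤ 2^q (A^(q+1) + B^(q+1))` for `A,B ≥ 0`, `q ≥ 0`. -/
lemma aux_convex {A B q : ℝ} (hA : 0 ≤ A) (hB : 0 ≤ B) (hq : 0 ≤ q) :
    (A + B) ^ (q + 1) ≤ 2 ^ q * (A ^ (q + 1) + B ^ (q + 1)) := by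
  have h := NNReal.rpow_add_le_mul_rpow_add_rpow A.toNNReal B.toNNReal
    (p := q + 1) (by linarith)
  have := (NNReal.coe_le_coe).2 h
  push_cast [NNReal.coe_rpow, Real.coe_toNNReal A hA, Real.coe_toNNReal B hB] at this
  simpa [show q + 1 - 1 = q by ring] using this

/-- Key scalar inequality. -/
lemma aux_key {A B D q : ℝ} (hA : 0 ≤ A) (hB : 0 ≤ B) (hD : 0 ≤ D)
    (hq : 0 ≤ q) (hDle : D ≤ A + B) :
    (1 / 2 : ℝ) ^ q * D ^ (q + 2) ≤
      ((A ^ q - B ^ q) * (A ^ (2:ℕ) - B ^ (2:ℕ)) + (A ^ q + B ^ q) * D ^ (2:ℕ)) / 2 := by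
  have hfirst : 0 ≤ (A ^ q - B ^ q) * (A ^ (2:ℕ) - B ^ (2:ℕ)) := by
    rcases le_total A B with h | h
    · have h1 : A ^ q ≤ B ^ q := Real.rpow_le_rpow hA h hq
      have h2 : A ^ (2:ℕ) ≤ B ^ (2:ℕ) := pow_le_pow_left₀ hA h 2
      nlinarith
    · have h1 : B ^ q ≤ A ^ q := Real.rpow_le_rpow hB h hq
      have h2 : B ^ (2:ℕ) ≤ A ^ (2:ℕ) := pow_le_pow_left₀ hB h 2
      nlinarith
  have hE : (0:ℝ) ≤ A + B := by linarith
  have hsplit : D ^ (q + 2) = D ^ q * D ^ (2:ℕ) := by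
    rw [← Real.rpow_natCast D 2, ← Real.rpow_add_of_nonneg hD hq (by norm_num)]
    norm_num
  have hDq : D ^ q ≤ (A + B) ^ q := Real.rpow_le_rpow hD hDle hq
  have hone : ((1:ℝ)/2) ^ q * 2 ^ q = 1 := by
    rw [← Real.mul_rpow (by norm_num) (by norm_num)]
    norm_num
  have hhq : (0:ℝ) ≤ (1/2:ℝ) ^ q := (Real.rpow_pos_of_pos (by norm_num) q).le
  rw [hsplit]
  have step1 : (1/2:ℝ) ^ q * (D ^ q * D ^ (2:ℕ)) ≤ (1/2:ℝ)^q * ((A+B) ^ q * D ^ (2:ℕ)) := by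
    have h0 : (0:ℝ) ≤ D ^ (2:ℕ) := sq_nonneg D
    nlinarith [mul_le_mul_of_nonneg_right hDq h0]
  refine step1.trans ?_
  have hD2 : D ^ (2:ℕ) ≤ (A+B) ^ (2:ℕ) := pow_le_pow_left₀ hD hDle 2
  rcases le_or_gt ((1/2:ℝ)^q * (A+B)^q * 2) (A ^ q + B ^ q) with hc | hc
  · nlinarith [sq_nonneg D, hfirst, mul_le_mul_of_nonneg_right hc (sq_nonneg D)]
  · have hprod : (A+B) ^ (q+1) = (A+B) ^ q * (A+B) := by
      rw [Real.rpow_add_of_nonneg hE hq zero_le_one, Real.rpow_one]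
    have hpow1 : A ^ (q+1) = A ^ q * A := by
      rw [Real.rpow_add_of_nonneg hA hq zero_le_one, Real.rpow_one]
    have hpow1' : B ^ (q+1) = B ^ q * B := by
      rw [Real.rpow_add_of_nonneg hB hq zero_le_one, Real.rpow_one]
    have hconv := aux_convex hA hB hq
    -- (1/2)^q * (A+B)^q * (A+B)^2 ≤ (A+B) * (A^q*A + B^q*B)
    have hstep2 : (1/2:ℝ)^q * ((A+B) ^ q * (A+B) ^ (2:ℕ)) ≤ (A+B) * (A ^ q * A + B ^ q * B) := by
      have h1 : (A+B) ^ q * (A+B) ^ (2:ℕ) = (A+B) ^ (q+1) * (A+B) := by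
        rw [hprod]; ring
      rw [h1]
      have h2 := mul_le_mul_of_nonneg_right hconv hE
      calc (1/2:ℝ)^q * ((A+B) ^ (q+1) * (A+B))
          ≤ (1/2:ℝ)^q * (2 ^ q * (A ^ (q+1) + B ^ (q+1)) * (A+B)) :=
            mul_le_mul_of_nonneg_left h2 hhq
        _ = (A+B) * (A ^ q * A + B ^ q * B) := by
            rw [hpow1, hpow1']
            linear_combination (A ^ q * A + B ^ q * B) * (A+B) * hone
    nlinarith [hstep2, hfirst, mul_le_mul_of_nonneg_left (sub_nonneg.2 hD2)
      (by linarith : (0:ℝ) ≤ (1/2:ℝ)^q * (A+B)^q * 2 - (A ^ q + B ^ q))]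

/-- Basic inequality I(d): for all `a b : ℝⁿ` and `p ≥ 2`,
`⟨‖a‖^(p-2) a − ‖b‖^(p-2) b, a − b⟩ ≥ (1/2)^(p-2) ‖a−b‖^p`. -/
theorem stmt_3 (n : ℕ) (a b : EuclideanSpace ℝ (Fin n)) (p : ℝ) (hp : 2 ≤ p) :
    ((1 : ℝ) / 2) ^ (p - 2) * ‖a - b‖ ^ p ≤
      (inner ℝ (‖a‖ ^ (p - 2) • a - ‖b‖ ^ (p - 2) • b) (a - b) : ℝ) := by
  set A := ‖a‖ with hAdef
  set B := ‖b‖ with hBdef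
  set D := ‖a - b‖ with hDdef
  set q := p - 2 with hqdef
  have hq : 0 ≤ q := by simp [hqdef]; linarith
  have hA : 0 ≤ A := norm_nonneg a
  have hB : 0 ≤ B := norm_nonneg b
  have hD : 0 ≤ D := norm_nonneg _
  have hDle : D ≤ A + B := norm_sub_le a b
  have key := aux_key hA hB hD hq hDle
  have hq2 : q + 2 = p := by simp [hqdef]
  rw [hq2] at key
  refine key.trans (le_of_eq ?_)
  have hinner : (inner ℝ (A ^ q • a - B ^ q • b) (a - b) : ℝ)
      = A ^ q * (inner ℝ a a : ℝ) - A ^ q * (inner ℝ a b : ℝ)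
        - B ^ q * (inner ℝ a b : ℝ) + B ^ q * (inner ℝ b b : ℝ) := by
    simp only [inner_sub_left, inner_sub_right, real_inner_smul_left]
    rw [real_inner_comm b a]
    ring
  have haa : (inner ℝ a a : ℝ) = A ^ (2:ℕ) := real_inner_self_eq_norm_sq a
  have hbb : (inner ℝ b b : ℝ) = B ^ (2:ℕ) := real_inner_self_eq_norm_sq b
  have hD2 : D ^ (2:ℕ) = A ^ (2:ℕ) - 2 * (inner ℝ a b : ℝ) + B ^ (2:ℕ) :=
    norm_sub_sq_real a b
  rw [hinner, haa, hbb, hD2]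
  ring
end

section
/- Let p > 1 and φ: R^n → R ∪ {+∞} be a proper lower semicontinuous function. Then the following are equivalent: (a) there exist γ > 0 and x ∈ R^n with inf_y (φ(y) + (1/(pγ))‖x−y‖^p) > −∞ (high-order prox-boundedness); (b) there exists ℓ > 0 such that φ(·) + ℓ‖·‖^p is bounded from below on R^n; (c) liminf_{‖x‖→∞} φ(x)/‖x‖^p > −∞. -/
open Filter

/-- The high-order Moreau envelope of parameter `γ` and order `p`. -/
noncomputable def highOrderMoreau {n : ℕ} (p γ : ℝ)
    (φ : EuclideanSpace ℝ (Fin n) → EReal) (x : EuclideanSpace ℝ (Fin n)) : EReal :=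
  ⨅ y : EuclideanSpace ℝ (Fin n),
    φ y + (((1 / (p * γ)) * ‖x - y‖ ^ p : ℝ) : EReal)

private lemma exists_real_le_of_ne_bot (a : EReal) (h : a ≠ ⊥) : ∃ m : ℝ, (m : EReal) ≤ a := by
  induction a with
  | bot => simp at h
  | coe x => exact ⟨x, le_refl _⟩
  | top => exact ⟨0, le_top⟩

private lemma rpow_add_le_aux {p : ℝ} (hp : 0 ≤ p) {a b : ℝ} (ha : 0 ≤ a) (hb : 0 ≤ b) :
    (a + b) ^ p ≤ 2 ^ p * (a ^ p + b ^ p) := by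
  have h1 : a + b ≤ 2 * max a b := by
    rcases le_total a b with h | h
    · rw [max_eq_right h]; linarith
    · rw [max_eq_left h]; linarith
  have hmax : 0 ≤ max a b := le_trans ha (le_max_left _ _)
  calc (a + b) ^ p ≤ (2 * max a b) ^ p :=
        Real.rpow_le_rpow (by positivity) h1 hp
    _ = 2 ^ p * (max a b) ^ p := Real.mul_rpow (by norm_num) hmax
    _ ≤ 2 ^ p * (a ^ p + b ^ p) := by
        have h2 : (max a b) ^ p ≤ a ^ p + b ^ p := by
          rcases max_cases a b with ⟨h, _⟩ | ⟨h, _⟩ <;> rw [h]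
          · nlinarith [Real.rpow_nonneg hb p]
          · nlinarith [Real.rpow_nonneg ha p]
        have h3 : (0:ℝ) ≤ 2 ^ p := Real.rpow_nonneg (by norm_num) p
        nlinarith

private lemma lsc_bdd_on_compact {n : ℕ} (φ : EuclideanSpace ℝ (Fin n) → EReal)
    (hlsc : LowerSemicontinuous φ) (hbot : ∀ x, φ x ≠ ⊥)
    {K : Set (EuclideanSpace ℝ (Fin n))} (hK : IsCompact K) :
    ∃ m : ℝ, ∀ x ∈ K, (m : EReal) ≤ φ x := by
  have hcov : K ⊆ ⋃ k : ℕ, φ ⁻¹' Set.Ioi ((-(k : ℝ) : ℝ) : EReal) := by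
    intro x _
    have hb : (⊥ : EReal) < φ x := bot_lt_iff_ne_bot.2 (hbot x)
    obtain ⟨r, _, hr2⟩ := EReal.exists_between_coe_real hb
    refine Set.mem_iUnion.2 ⟨⌈-r⌉₊, ?_⟩
    have : -(⌈-r⌉₊ : ℝ) ≤ r := by
      have := Nat.le_ceil (-r); linarith
    exact lt_of_le_of_lt (EReal.coe_le_coe_iff.2 this) hr2
  have hdir : Directed (· ⊆ ·) (fun k : ℕ => φ ⁻¹' Set.Ioi ((-(k : ℝ) : ℝ) : EReal)) := by
    intro i j
    refine ⟨max i j, fun x hx => ?_, fun x hx => ?_⟩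
    · refine lt_of_le_of_lt (EReal.coe_le_coe_iff.2
        (neg_le_neg (by exact_mod_cast le_max_left i j))) hx
    · refine lt_of_le_of_lt (EReal.coe_le_coe_iff.2
        (neg_le_neg (by exact_mod_cast le_max_right i j))) hx
  obtain ⟨k, hk⟩ := hK.elim_directed_cover _
    (fun k : ℕ => hlsc.isOpen_preimage _) hcov hdir
  exact ⟨-(k : ℝ), fun x hx => le_of_lt (hk hx)⟩

/-- Characterizations of high-order prox-boundedness: for `p > 1` and a proper lsc
`φ`, the following are equivalent:
(a) `∃ γ > 0, ∃ x`, the envelope `φ_γ^p(x) > −∞`;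
(b) `∃ ℓ > 0` with `φ + ℓ‖·‖^p` bounded below;
(c) `liminf_{‖x‖→∞} φ(x)/‖x‖^p > −∞`. -/
theorem stmt_6 {n : ℕ} (p : ℝ) (hp : 1 < p)
    (φ : EuclideanSpace ℝ (Fin n) → EReal)
    (hlsc : LowerSemicontinuous φ)
    (hbot : ∀ x, φ x ≠ ⊥) (hproper : ∃ x, φ x ≠ ⊤) :
    ((∃ γ : ℝ, 0 < γ ∧ ∃ x, highOrderMoreau p γ φ x ≠ ⊥) ↔
      (∃ ℓ : ℝ, 0 < ℓ ∧ ∃ m : ℝ, ∀ x,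
        (m : EReal) ≤ φ x + ((ℓ * ‖x‖ ^ p : ℝ) : EReal))) ∧
    ((∃ ℓ : ℝ, 0 < ℓ ∧ ∃ m : ℝ, ∀ x,
        (m : EReal) ≤ φ x + ((ℓ * ‖x‖ ^ p : ℝ) : EReal)) ↔
      (⊥ < Filter.liminf
        (fun x : EuclideanSpace ℝ (Fin n) => φ x * (((‖x‖ ^ p)⁻¹ : ℝ) : EReal))
        (Filter.comap (fun x : EuclideanSpace ℝ (Fin n) => ‖x‖) Filter.atTop))) := by
  have hp0 : (0:ℝ) < p := lt_trans one_pos hp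
  constructor
  · constructor
    · -- (a) → (b)
      rintro ⟨γ, hγ, x, hx⟩
      set c : ℝ := 1 / (p * γ) with hc
      have hcpos : 0 < c := by positivity
      obtain ⟨m, hm⟩ := exists_real_le_of_ne_bot _ hx
      have hm' : ∀ y, (m : EReal) ≤ φ y + ((c * ‖x - y‖ ^ p : ℝ) : EReal) := by
        intro y
        exact le_trans hm (iInf_le _ y)
      refine ⟨c * 2 ^ p, by positivity, m - c * 2 ^ p * ‖x‖ ^ p, fun y => ?_⟩
      have key : c * ‖x - y‖ ^ p ≤ c * 2 ^ p * ‖x‖ ^ p + c * 2 ^ p * ‖y‖ ^ p := by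
        have h1 : ‖x - y‖ ^ p ≤ (‖x‖ + ‖y‖) ^ p :=
          Real.rpow_le_rpow (norm_nonneg _) (norm_sub_le _ _) (le_of_lt hp0)
        have h2 := rpow_add_le_aux (le_of_lt hp0) (norm_nonneg x) (norm_nonneg y)
        nlinarith
      have hmy := hm' y
      rcases eq_or_ne (φ y) ⊤ with h | h
      · rw [h, EReal.top_add_of_ne_bot (EReal.coe_ne_bot _)]
        exact le_top
      · lift φ y to ℝ using ⟨h, hbot y⟩ with v hv
        have h3 : m ≤ v + c * ‖x - y‖ ^ p := by exact_mod_cast hmy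
        have : m - c * 2 ^ p * ‖x‖ ^ p ≤ v + c * 2 ^ p * ‖y‖ ^ p := by linarith
        exact_mod_cast this
    · -- (b) → (a)
      rintro ⟨ℓ, hℓ, m, hm⟩
      refine ⟨1 / (p * ℓ), by positivity, 0, ?_⟩
      have hcoef : 1 / (p * (1 / (p * ℓ))) = ℓ := by field_simp
      have hle : (m : EReal) ≤ highOrderMoreau p (1 / (p * ℓ)) φ 0 := by
        refine le_iInf fun y => ?_
        have : (0 : EuclideanSpace ℝ (Fin n)) - y = -y := zero_sub y
        rw [this, norm_neg, hcoef]
        exact hm y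
      exact fun h => by rw [h] at hle; exact (not_le.2 (EReal.bot_lt_coe m)) hle
  · constructor
    · -- (b) → (c)
      rintro ⟨ℓ, hℓ, m, hm⟩
      set C : ℝ := -|m| - ℓ with hC
      clear_value C
      have hev : ∀ᶠ x in comap (fun x : EuclideanSpace ℝ (Fin n) => ‖x‖) atTop,
          (C : EReal) ≤ φ x * (((‖x‖ ^ p)⁻¹ : ℝ) : EReal) := by
        rw [eventually_comap]
        filter_upwards [eventually_ge_atTop (1:ℝ)] with b hb x hxb
        have h1 : (1:ℝ) ≤ ‖x‖ := by rw [hxb]; exact hb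
        have ht : (1:ℝ) ≤ ‖x‖ ^ p := Real.one_le_rpow h1 (le_of_lt hp0)
        have htpos : (0:ℝ) < ‖x‖ ^ p := lt_of_lt_of_le one_pos ht
        have hipos : (0:ℝ) < (‖x‖ ^ p)⁻¹ := inv_pos.2 htpos
        have hmx := hm x
        rcases eq_or_ne (φ x) ⊤ with h | h
        · rw [h, EReal.top_mul_of_pos (by exact_mod_cast hipos)]
          exact le_top
        · lift φ x to ℝ using ⟨h, hbot x⟩ with v hv
          have h3 : m ≤ v + ℓ * ‖x‖ ^ p := by exact_mod_cast hmx
          rw [← EReal.coe_mul, EReal.coe_le_coe_iff]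
          rw [← div_eq_mul_inv, le_div_iff₀ htpos]
          have hml : -|m| * (‖x‖ ^ p) ≤ m := by nlinarith [abs_nonneg m, neg_abs_le m]
          nlinarith
      exact lt_of_lt_of_le (EReal.bot_lt_coe C) (le_liminf_of_le (by isBoundedDefault) hev)
    · -- (c) → (b)
      intro hlim
      obtain ⟨c, -, hc⟩ := EReal.exists_between_coe_real hlim
      have hev := eventually_lt_of_lt_liminf hc
      rw [eventually_comap] at hev
      rw [eventually_atTop] at hev
      obtain ⟨R, hR⟩ := hev
      obtain ⟨m₀, hm₀⟩ := lsc_bdd_on_compact φ hlsc hbot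
        (isCompact_closedBall (0 : EuclideanSpace ℝ (Fin n)) (max R 1))
      refine ⟨|c| + 1, by positivity, min m₀ 0, fun x => ?_⟩
      rcases le_or_gt ‖x‖ (max R 1) with h | h
      · have hx0 : (min m₀ 0 : EReal) ≤ φ x := by
          refine le_trans (EReal.coe_le_coe_iff.2 (min_le_left _ _)) (hm₀ x ?_)
          simpa [Metric.mem_closedBall, dist_zero_right] using h
        refine le_trans hx0 (le_add_of_nonneg_right ?_)
        have : (0:ℝ) ≤ (|c| + 1) * ‖x‖ ^ p := by positivity
        exact_mod_cast this
      · have hxR : R ≤ ‖x‖ := le_of_lt (lt_of_le_of_lt (le_max_left _ _) h)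
        have hx1 : (1:ℝ) < ‖x‖ := lt_of_le_of_lt (le_max_right _ _) h
        have hcx := hR ‖x‖ hxR x rfl
        have htpos : (0:ℝ) < ‖x‖ ^ p := Real.rpow_pos_of_pos (lt_trans one_pos hx1) p
        have h2 : ((c * ‖x‖ ^ p : ℝ) : EReal) ≤ φ x := by
          have h4 := mul_le_mul_of_nonneg_right hcx.le
            (le_of_lt (by exact_mod_cast htpos :
              (0:EReal) < ((‖x‖ ^ p : ℝ) : EReal)))
          rwa [mul_assoc, ← EReal.coe_mul, ← EReal.coe_mul, inv_mul_cancel₀ htpos.ne',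
            EReal.coe_one, mul_one] at h4
        calc (min m₀ 0 : EReal)
            ≤ ((c * ‖x‖ ^ p + (|c| + 1) * ‖x‖ ^ p : ℝ) : EReal) := by
              apply EReal.coe_le_coe_iff.2
              have : (0:ℝ) ≤ (c + |c| + 1) * ‖x‖ ^ p := by
                have := neg_abs_le c
                nlinarith
              have := min_le_right m₀ 0
              nlinarith
          _ = ((c * ‖x‖ ^ p : ℝ) : EReal) + (((|c| + 1) * ‖x‖ ^ p : ℝ) : EReal) :=
              EReal.coe_add _ _
          _ ≤ φ x + (((|c| + 1) * ‖x‖ ^ p : ℝ) : EReal) := add_le_add_left h2 _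
end

section
/- Let p > 1 and φ: R^n → R ∪ {+∞} be a proper lower semicontinuous function that is high-order prox-bounded with threshold γ^{φ,p} > 0. Then for every γ ∈ (0, γ^{φ,p}), the function Φ(y,x) := φ(y) + (1/(pγ))‖x−y‖^p is level-bounded in y locally uniformly in x, i.e., for every x̄ ∈ R^n and λ ∈ R there exist a neighborhood V of x̄ and a bounded set B ⊆ R^n such that {y : Φ(y,x) ≤ λ} ⊆ B for all x ∈ V. -/
private lemma exists_coe_le_of_ne_bot' (m : EReal) (h : m ≠ ⊥) : ∃ c : ℝ, (c : EReal) ≤ m := by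
  induction m using EReal.rec with
  | bot => exact absurd rfl h
  | coe r => exact ⟨r, le_rfl⟩
  | top => exact ⟨0, le_top⟩

set_option maxHeartbeats 1000000

/-- Basic properties of HOME/HOPE (level-boundedness): let `p > 1` and `φ` be a
proper lsc function, high-order prox-bounded with threshold `γth > 0` (i.e.
for every `γ' ∈ (0, γth)` the envelope is `> −∞` somewhere). Then for every
`γ ∈ (0, γth)`, `Φ(y,x) = φ(y) + (1/(pγ))‖x−y‖^p` is level-bounded in `y`
locally uniformly in `x`: for every `xbar` and `λ ∈ ℝ` there are a neighborhood
`V` of `xbar` and a bounded set `B` with `{y : Φ(y,x) ≤ λ} ⊆ B` for all `x ∈ V`. -/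
theorem stmt_7 {n : ℕ} (p γth : ℝ) (hp : 1 < p)
    (φ : EuclideanSpace ℝ (Fin n) → EReal)
    (hlsc : LowerSemicontinuous φ)
    (hbot : ∀ x, φ x ≠ ⊥) (hproper : ∃ x, φ x ≠ ⊤)
    (hth : 0 < γth)
    (hpb : ∀ γ' : ℝ, 0 < γ' → γ' < γth → ∃ x, highOrderMoreau p γ' φ x ≠ ⊥) :
    ∀ γ : ℝ, 0 < γ → γ < γth →
      ∀ (xbar : EuclideanSpace ℝ (Fin n)) (lam : ℝ),
        ∃ V ∈ nhds xbar, ∃ B : Set (EuclideanSpace ℝ (Fin n)),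
          Bornology.IsBounded B ∧
          ∀ x ∈ V,
            {y : EuclideanSpace ℝ (Fin n) |
              φ y + (((1 / (p * γ)) * ‖x - y‖ ^ p : ℝ) : EReal) ≤ (lam : EReal)} ⊆ B := by
  intro γ hγ hγlt xbar lam
  have hp0 : (0:ℝ) < p := lt_trans one_pos hp
  set γ' : ℝ := (γ + γth) / 2 with hγ'def
  have hγ'pos : 0 < γ' := by simp only [hγ'def]; linarith
  have hγγ' : γ < γ' := by simp only [hγ'def]; linarith
  have hγ'lt : γ' < γth := by simp only [hγ'def]; linarith
  obtain ⟨x0, hx0⟩ := hpb γ' hγ'pos hγ'lt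
  obtain ⟨c, hc⟩ := exists_coe_le_of_ne_bot' _ hx0
  set a : ℝ := 1 / (p * γ) with hadef
  set b : ℝ := 1 / (p * γ') with hbdef
  have ha0 : 0 < a := by positivity
  have hb0 : 0 < b := by positivity
  have hba : b < a := by
    apply one_div_lt_one_div_of_lt (by positivity)
    exact mul_lt_mul_of_pos_left hγγ' hp0
  set d : ℝ := ‖x0 - xbar‖ with hddef
  have hd0 : 0 ≤ d := norm_nonneg _
  set K : ℝ := 1 + d with hKdef
  have hK0 : 0 < K := by linarith
  set a' : ℝ := (a + b) / 2 with ha'def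
  have hba' : b < a' := by simp only [ha'def]; linarith
  have ha'a : a' < a := by simp only [ha'def]; linarith
  have ha'0 : 0 < a' := lt_trans hb0 hba'
  set r : ℝ := (a' / b) ^ (1 / p) with hrdef
  have hr1 : 1 < r := by
    rw [hrdef]
    exact Real.one_lt_rpow_iff_of_pos (by positivity) |>.2 (Or.inl ⟨(one_lt_div hb0).2 hba', by positivity⟩)
  have hr0 : 0 < r := lt_trans one_pos hr1
  have hrp : r ^ p = a' / b := by
    rw [hrdef, ← Real.rpow_mul (by positivity), one_div_mul_cancel (ne_of_gt hp0), Real.rpow_one]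
  set R : ℝ := max (K / (r - 1)) (max 1 (2 * (lam - c + 1) / (a - b))) with hRdef
  refine ⟨Metric.closedBall xbar 1, Metric.closedBall_mem_nhds _ one_pos,
    Metric.closedBall xbar (R + 1), Metric.isBounded_closedBall, ?_⟩
  intro x hx y hy
  simp only [Set.mem_setOf_eq] at hy
  have hcy : (c : EReal) ≤ φ y + (((1 / (p * γ')) * ‖x0 - y‖ ^ p : ℝ) : EReal) :=
    hc.trans (iInf_le _ y)
  set A : ℝ := (1 / (p * γ)) * ‖x - y‖ ^ p with hAdef
  set B0 : ℝ := (1 / (p * γ')) * ‖x0 - y‖ ^ p with hB0def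
  have h1 : (c : EReal) + (A : EReal) ≤ (φ y + (B0 : EReal)) + (A : EReal) :=
    add_le_add_left hcy _
  have h2 : (φ y + (B0 : EReal)) + (A : EReal) = (φ y + (A : EReal)) + (B0 : EReal) := by
    rw [add_assoc, add_assoc, add_comm (B0 : EReal)]
  have h3 : (φ y + (A : EReal)) + (B0 : EReal) ≤ (lam : EReal) + (B0 : EReal) :=
    add_le_add_left hy _
  have key : c + A ≤ lam + B0 := by
    have h4 := h1.trans (h2 ▸ h3)
    exact_mod_cast h4
  simp only [Metric.mem_closedBall]
  by_contra hR
  push_neg at hR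
  set t : ℝ := dist y xbar with htdef
  set s : ℝ := t - 1 with hsdef
  clear_value a b d a' r R K A B0 t s
  have hsR : R < s := by simp only [hsdef]; linarith
  have hR1 : (1:ℝ) ≤ R := by rw [hRdef]; exact le_trans (le_max_left 1 _) (le_max_right _ _)
  have hs1 : 1 ≤ s := le_trans hR1 hsR.le
  have hs0 : 0 ≤ s := by linarith
  have hxxbar : dist x xbar ≤ 1 := Metric.mem_closedBall.1 hx
  have hxy : s ≤ ‖x - y‖ := by
    have h5 : dist y xbar ≤ dist y x + dist x xbar := dist_triangle y x xbar
    have h6 : ‖x - y‖ = dist y x := by rw [dist_comm, dist_eq_norm]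
    simp only [hsdef, htdef]
    linarith
  have hx0y : ‖x0 - y‖ ≤ s + K := by
    have h5 : dist x0 y ≤ dist x0 xbar + dist xbar y := dist_triangle x0 xbar y
    have h6 : ‖x0 - y‖ = dist x0 y := (dist_eq_norm x0 y).symm
    have h7 : dist x0 xbar = d := by rw [dist_eq_norm]; exact hddef.symm
    have h8 : dist xbar y = t := by rw [dist_comm]; exact htdef.symm
    simp only [hsdef, hKdef]
    linarith
  have h4 : s ^ p ≤ ‖x - y‖ ^ p := Real.rpow_le_rpow hs0 hxy hp0.le
  have h5 : ‖x0 - y‖ ^ p ≤ (s + K) ^ p := Real.rpow_le_rpow (norm_nonneg _) hx0y hp0.le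
  have h6 : s + K ≤ r * s := by
    have h7 : K / (r - 1) ≤ s := le_trans (hRdef ▸ le_max_left _ _ : K / (r - 1) ≤ R) hsR.le
    have h8 : K ≤ s * (r - 1) := (div_le_iff₀ (by linarith)).1 h7
    nlinarith
  have h7 : (s + K) ^ p ≤ (r * s) ^ p := Real.rpow_le_rpow (by linarith) h6 hp0.le
  have h8 : (r * s) ^ p = (a' / b) * s ^ p := by
    rw [Real.mul_rpow hr0.le hs0, hrp]
  have hsp : s ≤ s ^ p := by
    calc s = s ^ (1:ℝ) := (Real.rpow_one s).symm
    _ ≤ s ^ p := Real.rpow_le_rpow_of_exponent_le hs1 hp.le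
  have e0 : a * s ^ p ≤ lam - c + a' * s ^ p := by
    have i1 : a * s ^ p ≤ a * ‖x - y‖ ^ p := mul_le_mul_of_nonneg_left h4 ha0.le
    have i2 : b * ‖x0 - y‖ ^ p ≤ a' * s ^ p := by
      calc b * ‖x0 - y‖ ^ p ≤ b * (r * s) ^ p :=
            mul_le_mul_of_nonneg_left (h5.trans h7) hb0.le
        _ = a' * s ^ p := by rw [h8]; field_simp
    have i3 : a * ‖x - y‖ ^ p ≤ lam - c + b * ‖x0 - y‖ ^ p := by
      have : A = a * ‖x - y‖ ^ p := by rw [hAdef, hadef]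
      have hB : B0 = b * ‖x0 - y‖ ^ p := by rw [hB0def, hbdef]
      linarith [key]
    linarith
  have e1 : (a - b) / 2 * s ^ p ≤ lam - c := by
    have h11 : (a - b) / 2 * s ^ p = a * s ^ p - a' * s ^ p := by
      rw [ha'def]; ring
    linarith
  have e2 : (a - b) / 2 * s ≤ (a - b) / 2 * s ^ p :=
    mul_le_mul_of_nonneg_left hsp (by linarith)
  have e3 : lam - c + 1 ≤ (a - b) / 2 * s := by
    have h9 : 2 * (lam - c + 1) / (a - b) ≤ s := by
      refine le_trans ?_ hsR.le
      rw [hRdef]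
      exact le_trans (le_max_right 1 _) (le_max_right _ _)
    have h10 : 2 * (lam - c + 1) ≤ s * (a - b) := (div_le_iff₀ (by linarith)).1 h9
    linarith
  linarith
end

section
/- Let p > 1, φ: R^n → R ∪ {+∞} be proper lsc, and suppose x̄ ∈ prox_φ^{γ̂,p}(x̄) for some γ̂ > 0. Then for every γ ∈ (0, γ̂), prox_φ^{γ,p}(x̄) = {x̄}, and consequently x̄ is a p-calm point of φ with constant M = 1/(pγ). -/
/-- The high-order proximal operator (HOPE). -/
def highOrderProx {n : ℕ} (p γ : ℝ)
    (φ : EuclideanSpace ℝ (Fin n) → EReal) (x : EuclideanSpace ℝ (Fin n)) :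
    Set (EuclideanSpace ℝ (Fin n)) :=
  {y | ∀ z, φ y + (((1 / (p * γ)) * ‖x - y‖ ^ p : ℝ) : EReal) ≤
            φ z + (((1 / (p * γ)) * ‖x - z‖ ^ p : ℝ) : EReal)}

/-- If `x̄ ∈ prox_φ^{γ̂,p}(x̄)` for some `γ̂ > 0`, then for every `γ ∈ (0, γ̂)`
one has `prox_φ^{γ,p}(x̄) = {x̄}`, and consequently `x̄` is a `p`-calm point of
`φ` with constant `M = 1/(pγ)`. -/
theorem stmt_15 {n : ℕ} (p γhat : ℝ) (hp : 1 < p) (hγhat : 0 < γhat)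
    (φ : EuclideanSpace ℝ (Fin n) → EReal)
    (hlsc : LowerSemicontinuous φ)
    (hbot : ∀ x, φ x ≠ ⊥) (hproper : ∃ x, φ x ≠ ⊤)
    (xbar : EuclideanSpace ℝ (Fin n)) (hdom : φ xbar ≠ ⊤)
    (hfix : xbar ∈ highOrderProx p γhat φ xbar) :
    ∀ γ : ℝ, 0 < γ → γ < γhat →
      highOrderProx p γ φ xbar = {xbar} ∧
      (∀ x, x ≠ xbar →
        φ xbar < φ x + (((1 / (p * γ)) * ‖x - xbar‖ ^ p : ℝ) : EReal)) := by
  intro γ hγ hγγ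
  have hp0 : (0:ℝ) < p := by linarith
  have h0 : ‖xbar - xbar‖ ^ p = (0:ℝ) := by
    simp [Real.zero_rpow (ne_of_gt hp0)]
  have hcalm : ∀ x, x ≠ xbar →
      φ xbar < φ x + (((1 / (p * γ)) * ‖x - xbar‖ ^ p : ℝ) : EReal) := by
    intro x hx
    have hnorm : (0:ℝ) < ‖x - xbar‖ ^ p := by
      apply Real.rpow_pos_of_pos
      rw [norm_pos_iff, sub_ne_zero]
      exact hx
    have hkey := hfix x
    rw [h0, mul_zero] at hkey
    simp only [EReal.coe_zero, add_zero] at hkey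
    have hrev : ‖xbar - x‖ = ‖x - xbar‖ := norm_sub_rev _ _
    rw [hrev] at hkey
    have hab : (1 / (p * γhat)) * ‖x - xbar‖ ^ p < (1 / (p * γ)) * ‖x - xbar‖ ^ p := by
      apply mul_lt_mul_of_pos_right _ hnorm
      apply one_div_lt_one_div_of_lt (by positivity)
      exact mul_lt_mul_of_pos_left hγγ hp0
    rcases eq_or_ne (φ x) ⊤ with htop | htop
    · rw [htop]
      rw [EReal.top_add_coe]
      exact lt_of_le_of_ne (le_top) hdom
    · obtain ⟨r, hr⟩ : ∃ r : ℝ, φ x = (r : EReal) := ⟨(φ x).toReal, (EReal.coe_toReal htop (hbot x)).symm⟩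
      rw [hr] at hkey ⊢
      refine lt_of_le_of_lt hkey ?_
      rw [← EReal.coe_add, ← EReal.coe_add, EReal.coe_lt_coe_iff]
      linarith
  refine ⟨?_, hcalm⟩
  ext y
  simp only [Set.mem_singleton_iff]
  constructor
  · intro hy
    by_contra hne
    have h1 := hy xbar
    rw [h0, mul_zero] at h1
    simp only [EReal.coe_zero, add_zero] at h1
    have h2 := hcalm y hne
    rw [norm_sub_rev] at h1
    exact absurd (lt_of_lt_of_le h2 h1) (lt_irrefl _)
  · intro hy
    intro z
    rw [hy]
    rw [h0, mul_zero]
    simp only [EReal.coe_zero, add_zero]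
    rcases eq_or_ne z xbar with rfl | hz
    · rw [h0, mul_zero]
      simp
    · rw [norm_sub_rev]
      exact (hcalm z hz).le
end

section
/- Let p > 1, let φ: R^n → R ∪ {+∞} be proper lsc, and let x̄ = 0 be a p-calm point of φ with constant M > 0 satisfying φ(0) = 0. Then for every γ ∈ (0, 2^{1−p}/(Mp)) and every ε > 0, there exists a neighborhood U of 0 such that for all x ∈ U: prox_φ^{γ,p}(x) ≠ ∅ and every y ∈ prox_φ^{γ,p}(x) satisfies ‖y‖ < ε, φ(y) < ε, and (1/γ)‖x − y‖^{p−1} < ε. -/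
open Real Set

/-- A lower semicontinuous `EReal`-valued function attains its minimum on a
nonempty compact set. -/
lemma lsc_exists_min {α : Type*} [TopologicalSpace α] {f : α → EReal}
    (hf : LowerSemicontinuous f) {S : Set α} (hS : IsCompact S) (hne : S.Nonempty) :
    ∃ y ∈ S, ∀ z ∈ S, f y ≤ f z := by
  by_contra h
  push_neg at h
  choose! z hzS hzlt using h
  have hcover : S ⊆ ⋃ y ∈ S, f ⁻¹' Set.Ioi (f (z y)) := fun y hy =>
    Set.mem_biUnion hy (hzlt y hy)
  obtain ⟨t, htS, htfin, hcov⟩ := hS.elim_finite_subcover_image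
    (fun y _ => hf.isOpen_preimage (f (z y))) hcover
  have htne : t.Nonempty := by
    obtain ⟨y, hy⟩ := hne
    obtain ⟨u, hu, -⟩ := Set.mem_iUnion₂.1 (hcov hy)
    exact ⟨u, hu⟩
  obtain ⟨y₀, hy₀t, hy₀min⟩ := Set.exists_min_image t (fun y => f (z y)) htfin htne
  have hz₀S : z y₀ ∈ S := hzS y₀ (htS hy₀t)
  obtain ⟨y₁, hy₁t, hy₁⟩ := Set.mem_iUnion₂.1 (hcov hz₀S)
  exact absurd (hy₀min y₁ hy₁t) (not_le.2 hy₁)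

/-- `(a+b)^p ≤ 2^(p-1) * (a^p + b^p)` for nonnegative reals and `1 ≤ p`. -/
lemma add_rpow_le_two_rpow_mul {a b p : ℝ} (ha : 0 ≤ a) (hb : 0 ≤ b) (hp : 1 ≤ p) :
    (a + b) ^ p ≤ (2 : ℝ) ^ (p - 1) * (a ^ p + b ^ p) := by
  have h := NNReal.rpow_add_le_mul_rpow_add_rpow ⟨a, ha⟩ ⟨b, hb⟩ hp
  have := NNReal.coe_le_coe.2 h
  push_cast at this
  exact this

set_option maxHeartbeats 1000000 in
/-- Uniform boundedness of HOPE: let `p > 1`, `φ` proper lsc, `x̄ = 0` a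
`p`-calm point of `φ` with constant `M > 0` and `φ(0) = 0`. Then for every
`γ ∈ (0, 2^(1−p)/(Mp))` and every `ε > 0`, there is a neighborhood `U` of `0`
such that for all `x ∈ U`, `prox_φ^{γ,p}(x) ≠ ∅`; and every
`y ∈ prox_φ^{γ,p}(x)` satisfies `‖y‖ < ε`, `φ(y) < ε`, and
`(1/γ)‖x−y‖^(p−1) < ε`. -/
theorem stmt_17 {n : ℕ} (p M : ℝ) (hp : 1 < p) (hM : 0 < M)
    (φ : EuclideanSpace ℝ (Fin n) → EReal)
    (hlsc : LowerSemicontinuous φ)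
    (hbot : ∀ x, φ x ≠ ⊥)
    (h0 : φ 0 = 0)
    (hcalm : ∀ x : EuclideanSpace ℝ (Fin n), x ≠ 0 →
      (0 : EReal) < φ x + ((M * ‖x‖ ^ p : ℝ) : EReal)) :
    ∀ γ : ℝ, 0 < γ → γ < (2 : ℝ) ^ (1 - p) / (M * p) →
      ∀ ε : ℝ, 0 < ε →
        ∃ U ∈ nhds (0 : EuclideanSpace ℝ (Fin n)),
          ∀ x ∈ U,
            (highOrderProx p γ φ x).Nonempty ∧
            ∀ y ∈ highOrderProx p γ φ x,
              ‖y‖ < ε ∧ φ y < (ε : EReal) ∧ (1 / γ) * ‖x - y‖ ^ (p - 1) < ε := by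
  intro γ hγ hγlt ε hε
  have hp0 : (0 : ℝ) < p := lt_trans one_pos hp
  have hpne : p ≠ 0 := ne_of_gt hp0
  have hp1 : (0 : ℝ) < p - 1 := sub_pos.2 hp
  set c : ℝ := 1 / (p * γ) with hc
  have hc0 : (0 : ℝ) < c := by rw [hc]; positivity
  have h2pos : (0 : ℝ) < (2 : ℝ) ^ (p - 1) := Real.rpow_pos_of_pos two_pos _
  set D : ℝ := M * (2 : ℝ) ^ (p - 1) with hD
  have hD0 : (0 : ℝ) < D := by rw [hD]; positivity
  have hDc : D < c := by
    have hMp : (0 : ℝ) < M * p := by positivity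
    have h1 : γ * (M * p) < (2 : ℝ) ^ (1 - p) := (lt_div_iff₀ hMp).1 hγlt
    have h2' : (2 : ℝ) ^ (1 - p) * (2 : ℝ) ^ (p - 1) = 1 := by
      rw [← Real.rpow_add two_pos]; norm_num
    have h3 : γ * (M * p) * (2 : ℝ) ^ (p - 1) < 1 := by
      calc γ * (M * p) * (2 : ℝ) ^ (p - 1)
          < (2 : ℝ) ^ (1 - p) * (2 : ℝ) ^ (p - 1) := mul_lt_mul_of_pos_right h1 h2pos
        _ = 1 := h2'
    rw [hD, hc, lt_div_iff₀ (by positivity : (0 : ℝ) < p * γ)]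
    nlinarith [h3]
  have hcD : (0 : ℝ) < c - D := sub_pos.2 hDc
  set K : ℝ := (c + D) / (c - D) with hK
  have hK0 : (0 : ℝ) < K := by rw [hK]; positivity
  set L : ℝ := K ^ p⁻¹ with hL
  have hL0 : (0 : ℝ) < L := by rw [hL]; exact Real.rpow_pos_of_pos hK0 _
  have hLp : L ^ p = K := by rw [hL]; exact Real.rpow_inv_rpow hK0.le hpne
  -- Key consequence of being better than `z = 0` in the prox problem.
  have key : ∀ x y : EuclideanSpace ℝ (Fin n),
      φ y + ((c * ‖x - y‖ ^ p : ℝ) : EReal) ≤ ((c * ‖x‖ ^ p : ℝ) : EReal) →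
      ∃ a : ℝ, φ y = (a : EReal) ∧ a + c * ‖x - y‖ ^ p ≤ c * ‖x‖ ^ p ∧
        ‖x - y‖ ≤ L * ‖x‖ := by
    intro x y hy0
    have hTop : φ y ≠ ⊤ := by
      intro hT
      rw [hT, EReal.top_add_coe] at hy0
      exact absurd hy0 (not_le.2 (EReal.coe_lt_top _))
    set a := (φ y).toReal with ha
    have hya : φ y = (a : EReal) := (EReal.coe_toReal hTop (hbot y)).symm
    rw [hya, ← EReal.coe_add, EReal.coe_le_coe_iff] at hy0
    have hxy : (0 : ℝ) ≤ ‖x - y‖ := norm_nonneg _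
    have hcalmy : -(M * ‖y‖ ^ p) ≤ a := by
      rcases eq_or_ne y 0 with rfl | hyne
      · have ha0 : a = 0 := by
          have h' : ((a : ℝ) : EReal) = (0 : EReal) := hya.symm.trans h0
          exact_mod_cast h'
        simp [ha0, Real.zero_rpow hpne]
      · have h' := hcalm y hyne
        rw [hya, ← EReal.coe_add] at h'
        have h'' : (0 : ℝ) < a + M * ‖y‖ ^ p := by exact_mod_cast h'
        linarith
    have hyb : ‖y‖ ≤ ‖x - y‖ + ‖x‖ := by
      have h := norm_sub_le (x - y) x
      simpa using h
    have hyp : ‖y‖ ^ p ≤ (2 : ℝ) ^ (p - 1) * (‖x - y‖ ^ p + ‖x‖ ^ p) :=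
      le_trans (Real.rpow_le_rpow (norm_nonneg y) hyb hp0.le)
        (add_rpow_le_two_rpow_mul hxy (norm_nonneg x) hp.le)
    have hineq : (c - D) * ‖x - y‖ ^ p ≤ (c + D) * ‖x‖ ^ p := by
      rw [hD]
      nlinarith [mul_le_mul_of_nonneg_left hyp hM.le, hy0, hcalmy]
    have h6 : ‖x - y‖ ^ p ≤ K * ‖x‖ ^ p := by
      rw [hK, div_mul_eq_mul_div, le_div_iff₀ hcD]
      linarith [hineq]
    have h7 : K * ‖x‖ ^ p = (L * ‖x‖) ^ p := by
      rw [Real.mul_rpow hL0.le (norm_nonneg x), hLp]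
    have h9 : ‖x - y‖ ^ p ≤ (L * ‖x‖) ^ p := h7 ▸ h6
    have h10 := Real.rpow_le_rpow (Real.rpow_nonneg hxy p) h9 (inv_nonneg.2 hp0.le)
    rw [Real.rpow_rpow_inv hxy hpne,
      Real.rpow_rpow_inv (by positivity) hpne] at h10
    exact ⟨a, hya, hy0, h10⟩
  -- membership gives the comparison with z = 0
  have memkey : ∀ x y : EuclideanSpace ℝ (Fin n), y ∈ highOrderProx p γ φ x →
      φ y + ((c * ‖x - y‖ ^ p : ℝ) : EReal) ≤ ((c * ‖x‖ ^ p : ℝ) : EReal) := by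
    intro x y hy
    simp only [highOrderProx, Set.mem_setOf_eq] at hy
    have h := hy 0
    rw [h0, sub_zero, zero_add] at h
    rw [hc]
    exact h
  -- existence of a minimizer
  have exist : ∀ x : EuclideanSpace ℝ (Fin n), (highOrderProx p γ φ x).Nonempty := by
    intro x
    set g : EuclideanSpace ℝ (Fin n) → EReal :=
      fun y => φ y + ((c * ‖x - y‖ ^ p : ℝ) : EReal) with hg
    have hglsc : LowerSemicontinuous g := by
      apply hlsc.add'
      · apply Continuous.lowerSemicontinuous
        apply continuous_coe_real_ereal.comp
        exact continuous_const.mul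
          ((continuous_const.sub continuous_id).norm.rpow_const (fun y => Or.inr hp0.le))
      · intro y
        exact EReal.continuousAt_add (Or.inr (EReal.coe_ne_bot _)) (Or.inr (EReal.coe_ne_top _))
    have hg0 : g 0 = ((c * ‖x‖ ^ p : ℝ) : EReal) := by
      simp only [hg, h0, sub_zero, zero_add]
    set S : Set (EuclideanSpace ℝ (Fin n)) := {y | g y ≤ g 0} with hSdef
    have hS0 : (0 : EuclideanSpace ℝ (Fin n)) ∈ S := Set.mem_setOf_eq ▸ le_refl (g 0)
    have hSclosed : IsClosed S := hglsc.isClosed_preimage (g 0)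
    have hSsub : S ⊆ Metric.closedBall x (L * ‖x‖) := by
      intro y hy
      have hy' : φ y + ((c * ‖x - y‖ ^ p : ℝ) : EReal) ≤ ((c * ‖x‖ ^ p : ℝ) : EReal) := by
        have := hy
        rw [hSdef] at this
        simp only [Set.mem_setOf_eq, hg0] at this
        exact this
      obtain ⟨a, -, -, h8⟩ := key x y hy'
      rw [Metric.mem_closedBall, dist_eq_norm]
      rwa [norm_sub_rev]
    have hScompact : IsCompact S :=
      (isCompact_closedBall x (L * ‖x‖)).of_isClosed_subset hSclosed hSsub
    obtain ⟨y₀, hy₀S, hy₀min⟩ := lsc_exists_min hglsc hScompact ⟨0, hS0⟩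
    refine ⟨y₀, ?_⟩
    simp only [highOrderProx, Set.mem_setOf_eq, ← hc]
    intro z
    show g y₀ ≤ g z
    by_cases hz : z ∈ S
    · exact hy₀min z hz
    · exact (hy₀min 0 hS0).trans (le_of_not_ge hz)
  -- choose the neighborhood
  set d1 : ℝ := ε / (1 + L) with hd1
  have hd1pos : 0 < d1 := by rw [hd1]; positivity
  set d2 : ℝ := (ε / c) ^ p⁻¹ with hd2
  have hd2pos : 0 < d2 := by rw [hd2]; exact Real.rpow_pos_of_pos (by positivity) _
  set A : ℝ := (γ * ε) ^ (p - 1)⁻¹ with hA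
  have hApos : 0 < A := by rw [hA]; exact Real.rpow_pos_of_pos (by positivity) _
  set d3 : ℝ := A / L with hd3
  have hd3pos : 0 < d3 := by rw [hd3]; positivity
  set δ : ℝ := min d1 (min d2 d3) with hδdef
  have hδpos : 0 < δ := by
    rw [hδdef]
    exact lt_min hd1pos (lt_min hd2pos hd3pos)
  refine ⟨Metric.ball 0 δ, Metric.ball_mem_nhds _ hδpos, ?_⟩
  intro x hx
  have hxδ : ‖x‖ < δ := by rwa [mem_ball_zero_iff] at hx
  refine ⟨exist x, ?_⟩
  intro y hy
  have hkey := memkey x y hy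
  obtain ⟨a, hya, hineq, h8⟩ := key x y hkey
  have hxnn : (0 : ℝ) ≤ ‖x‖ := norm_nonneg x
  have hxynn : (0 : ℝ) ≤ ‖x - y‖ := norm_nonneg _
  refine ⟨?_, ?_, ?_⟩
  · -- ‖y‖ < ε
    have hyb : ‖y‖ ≤ ‖x - y‖ + ‖x‖ := by
      have h := norm_sub_le (x - y) x
      simpa using h
    have h1 : ‖y‖ ≤ (1 + L) * ‖x‖ := by nlinarith [h8, hyb]
    have h2 : (1 + L) * ‖x‖ < (1 + L) * d1 := by
      apply mul_lt_mul_of_pos_left (lt_of_lt_of_le hxδ ?_) (by positivity)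
      rw [hδdef]; exact min_le_left _ _
    have h3 : (1 + L) * d1 = ε := by
      rw [hd1, mul_div_cancel₀ _ (by positivity : (1 : ℝ) + L ≠ 0)]
    linarith
  · -- φ y < ε
    rw [hya, EReal.coe_lt_coe_iff]
    have h1 : a ≤ c * ‖x‖ ^ p := by
      nlinarith [hineq, mul_nonneg hc0.le (Real.rpow_nonneg hxynn p)]
    have hxd2 : ‖x‖ < d2 := lt_of_lt_of_le hxδ (by rw [hδdef]; exact (min_le_right _ _).trans (min_le_left _ _))
    have h2 : ‖x‖ ^ p < d2 ^ p := Real.rpow_lt_rpow hxnn hxd2 hp0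
    have h3 : d2 ^ p = ε / c := by
      rw [hd2]; exact Real.rpow_inv_rpow (by positivity) hpne
    have h4 : c * (ε / c) = ε := by field_simp
    calc a ≤ c * ‖x‖ ^ p := h1
      _ < c * d2 ^ p := mul_lt_mul_of_pos_left h2 hc0
      _ = c * (ε / c) := by rw [h3]
      _ = ε := h4
  · -- (1/γ) ‖x-y‖^(p-1) < ε
    have hxd3 : ‖x‖ < d3 := lt_of_lt_of_le hxδ (by rw [hδdef]; exact (min_le_right _ _).trans (min_le_right _ _))
    have h1 : ‖x - y‖ < L * d3 := lt_of_le_of_lt h8 (mul_lt_mul_of_pos_left hxd3 hL0)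
    have h2 : L * d3 = A := by
      rw [hd3, mul_div_cancel₀ _ hL0.ne']
    have h3 : ‖x - y‖ ^ (p - 1) < A ^ (p - 1) :=
      Real.rpow_lt_rpow hxynn (h2 ▸ h1) hp1
    have h4 : A ^ (p - 1) = γ * ε := by
      rw [hA]; exact Real.rpow_inv_rpow (by positivity) hp1.ne'
    have h5 : (1 / γ) * (γ * ε) = ε := by field_simp
    calc (1 / γ) * ‖x - y‖ ^ (p - 1)
        < (1 / γ) * A ^ (p - 1) := mul_lt_mul_of_pos_left h3 (by positivity)
      _ = (1 / γ) * (γ * ε) := by rw [h4]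
      _ = ε := h5
end

section
/- Let p ∈ (1,2] and r > 0. Then for all a, b in the open ball B(0;r) ⊆ R^n, it holds that ⟨‖a‖^{p-2}a − ‖b‖^{p-2}b, a − b⟩ ≥ κ_p r^{p-2} ‖a − b‖^2, where κ_p > 0 is an explicit constant depending only on p (with κ_2 = 1 and, for p ∈ (1,2), κ_p ≥ (2+√3)(p−1)/16 near p = 1), and the convention 0^{p-2}·0 = 0 is used. -/
/-- The constant `κ(t)` for `t ∈ (1,2]`, defined relative to the breakpoint
`t̂ ∈ (1,2)` (the solution of `t(t−1)/2 = 1 − [1 + (2−√3)t/(t−1)]^(1−t)`):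
`κ(t) = (2+√3)(t−1)/16` for `t ∈ (1, t̂]`,
`κ(t) = (2+√3)(1 − (3−√3)^(1−t))/16` for `t ∈ [t̂, 2)`, and `κ(2) = 1`. -/
noncomputable def kappa (that t : ℝ) : ℝ :=
  if t = 2 then 1
  else if t ≤ that then (2 + Real.sqrt 3) * (t - 1) / 16
  else (2 + Real.sqrt 3) / 16 * (1 - (3 - Real.sqrt 3) ^ (1 - t))

lemma sqrt3_lt_two : Real.sqrt 3 < 2 := by
  nlinarith [Real.sq_sqrt (show (0:ℝ) ≤ 3 by norm_num), Real.sqrt_nonneg 3]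

lemma kappa_pos' (that p : ℝ) (hp1 : 1 < p) (hp2 : p ≤ 2) : 0 < kappa that p := by
  have h3 := Real.sqrt_nonneg 3
  unfold kappa
  split_ifs with h1 h2
  · norm_num
  · apply div_pos _ (by norm_num)
    apply mul_pos (by nlinarith) (by linarith)
  · apply mul_pos (by positivity)
    have hlt : (3 - Real.sqrt 3 : ℝ) ^ (1 - p) < 1 := by
      apply Real.rpow_lt_one_of_one_lt_of_neg
      · nlinarith [sqrt3_lt_two]
      · linarith
    linarith

lemma kappa_le_one' (that p : ℝ) (hp1 : 1 < p) (hp2 : p ≤ 2) : kappa that p ≤ 1 := by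
  have h3 := Real.sqrt_nonneg 3
  have h32 := sqrt3_lt_two
  unfold kappa
  split_ifs with h1 h2
  · exact le_refl 1
  · rw [div_le_one (by norm_num)]
    nlinarith
  · have hnn : (0:ℝ) ≤ (3 - Real.sqrt 3 : ℝ) ^ (1 - p) :=
      Real.rpow_nonneg (by nlinarith) _
    nlinarith

lemma kappa_le_sub' (that p : ℝ) (hp1 : 1 < p) (hp2 : p ≤ 2) : kappa that p ≤ p - 1 := by
  have h3 := Real.sqrt_nonneg 3
  have h32 := sqrt3_lt_two
  have hsq : Real.sqrt 3 ^ 2 = 3 := Real.sq_sqrt (by norm_num)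
  unfold kappa
  split_ifs with h1 h2
  · rw [h1]; norm_num
  · rw [div_le_iff₀ (by norm_num)]
    nlinarith
  · set y : ℝ := 3 - Real.sqrt 3 with hy
    have hy1 : (1:ℝ) < y := by nlinarith
    have hy0 : (0:ℝ) < y := by linarith
    -- 1 - y^(1-p) ≤ (p-1) * log y
    have hexp : 1 + (1 - p) * Real.log y ≤ y ^ (1 - p) := by
      rw [Real.rpow_def_of_pos hy0]
      linarith [Real.add_one_le_exp (Real.log y * (1 - p))]

    have hlog1 : Real.log y ≤ y - 1 := Real.log_le_sub_one_of_pos hy0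
    have hlog0 : 0 ≤ Real.log y := Real.log_nonneg hy1.le
    have key : 1 - y ^ (1 - p) ≤ (p - 1) * Real.log y := by linarith
    have key2 : (p - 1) * Real.log y ≤ (p - 1) * (2 - Real.sqrt 3) := by
      apply mul_le_mul_of_nonneg_left (by simp only [hy] at hlog1 ⊢; linarith) (by linarith)
    have hfac : (0:ℝ) < (2 + Real.sqrt 3) / 16 := by positivity
    calc (2 + Real.sqrt 3) / 16 * (1 - y ^ (1 - p))
        ≤ (2 + Real.sqrt 3) / 16 * ((p - 1) * (2 - Real.sqrt 3)) := by
          apply mul_le_mul_of_nonneg_left (by linarith) hfac.le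
      _ = (p - 1) * ((2 + Real.sqrt 3) * (2 - Real.sqrt 3)) / 16 := by ring
      _ = (p - 1) / 16 := by nlinarith
      _ ≤ p - 1 := by linarith

/-- Bernoulli-type inequality: for `0 < q ≤ 1` and `0 ≤ B ≤ A`, `0 < A`,
`q * A^(q-1) * (A - B) ≤ A^q - B^q`. -/
lemma bern_ineq (q : ℝ) (hq0 : 0 < q) (hq1 : q ≤ 1) (A B : ℝ)
    (hB : 0 ≤ B) (hBA : B ≤ A) (hA : 0 < A) :
    q * A ^ (q - 1) * (A - B) ≤ A ^ q - B ^ q := by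
  have hx0 : (0:ℝ) ≤ B / A := div_nonneg hB hA.le
  have hbern : (B / A) ^ q ≤ 1 + q * (B / A - 1) := by
    have := rpow_one_add_le_one_add_mul_self (s := B / A - 1)
      (by linarith) hq0.le hq1
    simpa using this
  have hdiv : (B / A) ^ q = B ^ q / A ^ q := Real.div_rpow hB hA.le q
  have hApos : (0:ℝ) < A ^ q := Real.rpow_pos_of_pos hA q
  have hsub : A ^ (q - 1) = A ^ q / A := by
    rw [Real.rpow_sub hA, Real.rpow_one]
  rw [hsub]
  rw [hdiv] at hbern
  have h1 : B ^ q ≤ (1 + q * (B / A - 1)) * A ^ q := by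
    rw [div_le_iff₀ hApos] at hbern
    exact hbern
  have hAA : A ≠ 0 := hA.ne'
  have : (1 + q * (B / A - 1)) * A ^ q = A ^ q + q * (A ^ q / A) * (B - A) := by
    field_simp
  rw [this] at h1
  linarith

/-- Scalar core inequality. -/
lemma scalar_key (p r k A B s : ℝ) (hp1 : 1 < p) (hp2 : p ≤ 2) (hr : 0 < r)
    (hk0 : 0 ≤ k) (hk1 : k ≤ 1) (hkp : k ≤ p - 1)
    (hB0 : 0 ≤ B) (hBA : B ≤ A) (hAr : A < r)
    (hs : s ≤ A * B) (hBs : B = 0 → s = 0) :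
    k * r ^ (p - 2) * (A ^ 2 + B ^ 2 - 2 * s) ≤
      A ^ (p - 2) * (A ^ 2 - s) + B ^ (p - 2) * (B ^ 2 - s) := by
  have hRpos : (0:ℝ) < r ^ (p - 2) := Real.rpow_pos_of_pos hr _
  rcases eq_or_lt_of_le hB0 with hB | hB
  · -- B = 0, hence s = 0
    have hs0 : s = 0 := hBs hB.symm
    subst hs0
    rw [← hB]
    rcases eq_or_lt_of_le (hB.le.trans hBA) with hA | hA
    · rw [← hA]; simp
    · have hrA : r ^ (p - 2) ≤ A ^ (p - 2) :=
        Real.rpow_le_rpow_of_nonpos hA hAr.le (by linarith)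
      have hA2 : (0:ℝ) ≤ A ^ 2 := sq_nonneg A
      have hkR : k * r ^ (p - 2) ≤ A ^ (p - 2) := by nlinarith
      nlinarith [mul_le_mul_of_nonneg_right hkR hA2]
  · -- 0 < B ≤ A
    have hA : (0:ℝ) < A := lt_of_lt_of_le hB hBA
    have hrA : r ^ (p - 2) ≤ A ^ (p - 2) :=
      Real.rpow_le_rpow_of_nonpos hA hAr.le (by linarith)
    have hrB : r ^ (p - 2) ≤ B ^ (p - 2) :=
      Real.rpow_le_rpow_of_nonpos hB (by linarith) (by linarith)
    have hbern : (p - 1) * A ^ (p - 2) * (A - B) ≤ A ^ (p - 1) - B ^ (p - 1) := by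
      have := bern_ineq (p - 1) (by linarith) (by linarith) A B hB0 hBA hA
      have he : p - 1 - 1 = p - 2 := by ring
      rwa [he] at this
    have hApe : A ^ (p - 1) = A ^ (p - 2) * A := by
      rw [show p - 1 = (p - 2) + 1 by ring, Real.rpow_add_one hA.ne']
    have hBpe : B ^ (p - 1) = B ^ (p - 2) * B := by
      rw [show p - 1 = (p - 2) + 1 by ring, Real.rpow_add_one hB.ne']
    set X := A ^ (p - 2) with hX
    set Y := B ^ (p - 2) with hY
    set R := r ^ (p - 2) with hR
    rw [hApe, hBpe] at hbern
    -- slope nonneg factor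
    have hslope : 0 ≤ X + Y - 2 * (k * R) := by nlinarith
    have hAB : 0 ≤ A * B - s := by linarith
    have h1 : 0 ≤ (A * B - s) * (X + Y - 2 * (k * R)) := mul_nonneg hAB hslope
    -- f(AB) ≥ 0 : (A-B)*(X*A - Y*B - k*R*(A-B)) ≥ 0
    have hX0 : (0:ℝ) < X := Real.rpow_pos_of_pos hA _
    have hstep : k * R ≤ (p - 1) * X := by
      nlinarith [mul_le_mul_of_nonneg_left hrA hk0, mul_le_mul_of_nonneg_right hkp hX0.le]
    have hXA : k * R * (A - B) ≤ X * A - Y * B :=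
      le_trans (mul_le_mul_of_nonneg_right hstep (by linarith)) hbern
    have h2 : 0 ≤ (A - B) * (X * A - Y * B - k * R * (A - B)) :=
      mul_nonneg (by linarith) (by linarith)
    nlinarith [h1, h2]

/-- Vector form, assuming `‖b‖ ≤ ‖a‖`. -/
lemma vector_key (p r k : ℝ) (hp1 : 1 < p) (hp2 : p ≤ 2) (hr : 0 < r)
    (hk0 : 0 ≤ k) (hk1 : k ≤ 1) (hkp : k ≤ p - 1)
    (n : ℕ) (a b : EuclideanSpace ℝ (Fin n)) (ha : ‖a‖ < r) (hb : ‖b‖ < r)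
    (hBA : ‖b‖ ≤ ‖a‖) :
    k * r ^ (p - 2) * ‖a - b‖ ^ 2 ≤
      (inner ℝ (‖a‖ ^ (p - 2) • a - ‖b‖ ^ (p - 2) • b) (a - b) : ℝ) := by
  set s : ℝ := inner ℝ a b with hsdef
  have hnorm : ‖a - b‖ ^ 2 = ‖a‖ ^ 2 + ‖b‖ ^ 2 - 2 * s := by
    rw [norm_sub_sq_real]; ring
  have hinner : (inner ℝ (‖a‖ ^ (p - 2) • a - ‖b‖ ^ (p - 2) • b) (a - b) : ℝ) =
      ‖a‖ ^ (p - 2) * (‖a‖ ^ 2 - s) + ‖b‖ ^ (p - 2) * (‖b‖ ^ 2 - s) := by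
    simp only [inner_sub_left, inner_sub_right, real_inner_smul_left,
      real_inner_self_eq_norm_sq]
    have hs2 : (inner ℝ b a : ℝ) = s := by rw [real_inner_comm]
    rw [hs2]
    ring
  rw [hnorm, hinner]
  apply scalar_key p r k ‖a‖ ‖b‖ s hp1 hp2 hr hk0 hk1 hkp (norm_nonneg b) hBA ha
  · exact real_inner_le_norm a b
  · intro hb0
    have : b = 0 := norm_eq_zero.mp hb0
    simp [hsdef, this]

/-- Basic inequality II(a): let `t̂ ∈ (1,2)` be the solution of
`t(t−1)/2 = 1 − [1 + (2−√3)t/(t−1)]^(1−t)`, `p ∈ (1,2]`, and `r > 0`. Then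
`κ_p > 0` and for all `a, b` in the open ball `B(0;r)` of `ℝⁿ`,
`⟨‖a‖^(p−2) a − ‖b‖^(p−2) b, a − b⟩ ≥ κ_p r^(p−2) ‖a−b‖²`. -/
theorem stmt_18 (that : ℝ) (hthat1 : 1 < that) (hthat2 : that < 2)
    (hthateq : that * (that - 1) / 2 =
      1 - (1 + (2 - Real.sqrt 3) * that / (that - 1)) ^ (1 - that))
    (p : ℝ) (hp1 : 1 < p) (hp2 : p ≤ 2) :
    0 < kappa that p ∧
    ∀ (n : ℕ) (r : ℝ), 0 < r →
      ∀ a b : EuclideanSpace ℝ (Fin n), ‖a‖ < r → ‖b‖ < r →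
        kappa that p * r ^ (p - 2) * ‖a - b‖ ^ 2 ≤
          (inner ℝ (‖a‖ ^ (p - 2) • a - ‖b‖ ^ (p - 2) • b) (a - b) : ℝ) := by
  have hpos := kappa_pos' that p hp1 hp2
  refine ⟨hpos, ?_⟩
  intro n r hr a b ha hb
  have hk0 : 0 ≤ kappa that p := hpos.le
  have hk1 := kappa_le_one' that p hp1 hp2
  have hkp := kappa_le_sub' that p hp1 hp2
  rcases le_total ‖b‖ ‖a‖ with h | h
  · exact vector_key p r _ hp1 hp2 hr hk0 hk1 hkp n a b ha hb h
  · have := vector_key p r _ hp1 hp2 hr hk0 hk1 hkp n b a hb ha h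
    have hswap : (inner ℝ (‖b‖ ^ (p - 2) • b - ‖a‖ ^ (p - 2) • a) (b - a) : ℝ) =
        (inner ℝ (‖a‖ ^ (p - 2) • a - ‖b‖ ^ (p - 2) • b) (a - b) : ℝ) := by
      rw [show ‖b‖ ^ (p - 2) • b - ‖a‖ ^ (p - 2) • a =
        -(‖a‖ ^ (p - 2) • a - ‖b‖ ^ (p - 2) • b) by abel,
        show b - a = -(a - b) by abel, inner_neg_neg]
    rw [hswap, norm_sub_rev b a] at this
    exact this
end
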